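/- arXiv:1701.06430 — 2 statements merged into one kernel-verified Lean document; each statement's English description precedes it below -/
import Mathlib

section
/- Suppose a family B of measurable subsets of [0,1]^d admits, for every δ ∈ (0,1), a δ-cover of cardinality at most (c_1 d^{c_2} δ^{-1})^{c_3 d}, where c_1 ≥ 1 and c_2, c_3 ≥ 0. Then for all n > c_3 d, the minimal dispersion satisfies disp_B(n,d) ≤ (c_3 d / n) [ log( c_1 d^{c_2 − 1} n / c_3 ) + 1 ]. -/
/-!
Fix `δ` and a bracketing `δ`-cover `Γ` with `|Γ| ≤ exp K`. For `n` independent uniform points of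
the cube, the expected number of sets `S ∈ Γ` of volume `> K / n` that none of them hits is
`∑ (1 - λ S) ^ n < |Γ| exp (-K) ≤ 1`, so some `n` points hit all of them. If `B` misses these
points, so does its lower bracket `L`, whence `λ B ≤ λ L + λ (U \ L) ≤ K / n + δ`. The theorem is
the case `δ = c₃ d / n`, `K = c₃ d log (c₁ d ^ c₂ / δ)`; for `c₃ = 0` one lets `δ → 0`.
-/

open MeasureTheory Set Real Topology
open scoped ENNReal

theorem Set.Infinite.exists_finset_superset_card_eq {α : Type*} {s : Set α} (hs : s.Infinite)
    {T : Finset α} (hT : ↑T ⊆ s) {n : ℕ} (hn : T.card ≤ n) :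
    ∃ P : Finset α, T ⊆ P ∧ ↑P ⊆ s ∧ P.card = n := by
  classical
  obtain ⟨E, hEs, hEcard⟩ := (hs.sdiff T.finite_toSet).exists_subset_card_eq (n - T.card)
  have hdisj : Disjoint T E := Finset.disjoint_left.2 fun _ haT haE => (hEs haE).2 haT
  refine ⟨T ∪ E, Finset.subset_union_left, ?_, ?_⟩
  · rw [Finset.coe_union]
    exact union_subset hT (hEs.trans sdiff_subset)
  · rw [Finset.card_union_of_disjoint hdisj, hEcard]
    omega

variable {α : Type*} [MeasurableSpace α] {μ : Measure α}

noncomputable def dispersion (μ : Measure α) (s : Set α) (𝓑 : Set (Set α)) (n : ℕ) : ℝ≥0∞ :=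
  ⨅ P : {P : Finset α // P.card = n ∧ (↑P : Set α) ⊆ s},
    ⨆ B ∈ 𝓑, ⨆ _ : Disjoint B (P : Set α), μ B

theorem exists_hitting_of_sum_measure_compl_pow_lt_one [IsProbabilityMeasure μ]
    {Γ : Finset (Set α)} (hΓ : ∀ S ∈ Γ, MeasurableSet S) {n : ℕ}
    (h : ∑ S ∈ Γ, μ Sᶜ ^ n < 1) : ∃ x : Fin n → α, ∀ S ∈ Γ, ∃ i, x i ∈ S := by
  set missed : (Fin n → α) → ℝ≥0∞ :=
    fun x => ∑ S ∈ Γ, (Set.univ.pi fun _ => Sᶜ).indicator 1 x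
  have hmeas : ∀ S ∈ Γ, MeasurableSet (Set.univ.pi fun _ : Fin n => Sᶜ) :=
    fun S hS => .univ_pi fun _ => (hΓ S hS).compl
  have hint : ∫⁻ x, missed x ∂(Measure.pi fun _ => μ) = ∑ S ∈ Γ, μ Sᶜ ^ n := by
    rw [lintegral_finsetSum _ fun S hS => measurable_one.indicator (hmeas S hS)]
    refine Finset.sum_congr rfl fun S hS => ?_
    rw [lintegral_indicator_one (hmeas S hS), Measure.pi_pi, Finset.prod_const, Finset.card_univ,
      Fintype.card_fin]
  obtain ⟨x, hx⟩ := exists_le_lintegral (μ := Measure.pi fun _ : Fin n => μ)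
    (Finset.measurable_sum _ fun S hS => measurable_one.indicator (hmeas S hS)).aemeasurable
  refine ⟨x, fun S hS => ?_⟩
  by_contra! hmiss
  have hx_missed : x ∈ Set.univ.pi fun _ => Sᶜ := fun i _ => hmiss i
  have hone : 1 ≤ missed x := by
    calc (1 : ℝ≥0∞) = (Set.univ.pi fun _ => Sᶜ).indicator 1 x := by
          rw [indicator_of_mem hx_missed, Pi.one_apply]
      _ ≤ missed x := Finset.single_le_sum
          (f := fun S => (Set.univ.pi fun _ => Sᶜ).indicator 1 x) (fun _ _ => zero_le) hS
  exact (hone.trans (hx.trans hint.le)).not_gt h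

theorem measure_compl_lt_ofReal_exp_neg [IsProbabilityMeasure μ] {S : Set α}
    (hS : MeasurableSet S) {ε : ℝ} (h : ENNReal.ofReal ε < μ S) :
    μ Sᶜ < ENNReal.ofReal (exp (-ε)) := by
  rw [prob_compl_eq_one_sub hS]
  refine ENNReal.sub_lt_of_lt_add prob_le_one ?_
  calc (1 : ℝ≥0∞) = ENNReal.ofReal 1 := ENNReal.ofReal_one.symm
    _ ≤ ENNReal.ofReal (exp (-ε) + ε) :=
        ENNReal.ofReal_le_ofReal (by linarith [add_one_le_exp (-ε)])
    _ ≤ ENNReal.ofReal (exp (-ε)) + ENNReal.ofReal ε := ENNReal.ofReal_add_le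
    _ < ENNReal.ofReal (exp (-ε)) + μ S := ENNReal.add_lt_add_left ENNReal.ofReal_ne_top h

theorem sum_measure_compl_pow_lt_one [IsProbabilityMeasure μ] {Γ : Finset (Set α)}
    (hΓ : ∀ S ∈ Γ, MeasurableSet S) {ε : ℝ} (hε : ∀ S ∈ Γ, ENNReal.ofReal ε < μ S)
    {n : ℕ} (hn : n ≠ 0) (hcard : (Γ.card : ℝ) ≤ exp (ε * n)) :
    ∑ S ∈ Γ, μ Sᶜ ^ n < 1 := by
  rcases Γ.eq_empty_or_nonempty with rfl | hne
  · simp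
  calc ∑ S ∈ Γ, μ Sᶜ ^ n < ∑ _S ∈ Γ, ENNReal.ofReal (exp (-ε)) ^ n :=
        ENNReal.sum_lt_sum_of_nonempty hne fun S hS =>
          ENNReal.pow_lt_pow_left hn (measure_compl_lt_ofReal_exp_neg (hΓ S hS) (hε S hS))
    _ = ENNReal.ofReal (Γ.card * exp (-(ε * n))) := by
        rw [Finset.sum_const, nsmul_eq_mul, ENNReal.ofReal_mul (by positivity),
          ENNReal.ofReal_natCast, ← ENNReal.ofReal_pow (exp_pos _).le, ← exp_nat_mul]
        ring_nf
    _ ≤ 1 := by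
        rw [← ENNReal.ofReal_one, exp_neg]
        refine ENNReal.ofReal_le_ofReal ?_
        rwa [← div_eq_mul_inv, div_le_one (exp_pos _)]

theorem exists_hitting_of_card_le_exp [IsProbabilityMeasure μ] {Γ : Finset (Set α)}
    (hΓ : ∀ S ∈ Γ, MeasurableSet S) {ε : ℝ} {n : ℕ} (hn : n ≠ 0)
    (hcard : (Γ.card : ℝ) ≤ exp (ε * n)) :
    ∃ x : Fin n → α, ∀ S ∈ Γ, ENNReal.ofReal ε < μ S → ∃ i, x i ∈ S := by
  classical
  set Γlarge := Γ.filter fun S => ENNReal.ofReal ε < μ S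
  obtain ⟨x, hx⟩ := exists_hitting_of_sum_measure_compl_pow_lt_one
    (Γ := Γlarge) (fun S hS => hΓ S (Finset.mem_filter.1 hS).1)
    (sum_measure_compl_pow_lt_one (fun S hS => hΓ S (Finset.mem_filter.1 hS).1)
      (fun S hS => (Finset.mem_filter.1 hS).2) hn
      (le_trans (by exact_mod_cast Finset.card_filter_le _ _) hcard))
  exact ⟨x, fun S hS hlarge => hx S (Finset.mem_filter.2 ⟨hS, hlarge⟩)⟩

theorem dispersion_le_of_bracketing [NullSingletonClass μ] {s : Set α} (hs : μ s = 1)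
    {𝓑 : Set (Set α)} {Γ : Finset (Set α)} (hΓ : ∀ S ∈ Γ, MeasurableSet S ∧ S ⊆ s)
    {δ K : ℝ} (hδ : 0 ≤ δ) (hK : 0 ≤ K)
    (hcov : ∀ B ∈ 𝓑, ∃ L ∈ Γ, ∃ U ∈ Γ, L ⊆ B ∧ B ⊆ U ∧ μ (U \ L) ≤ ENNReal.ofReal δ)
    (hcard : (Γ.card : ℝ) ≤ exp K) {n : ℕ} (hn : n ≠ 0) :
    dispersion μ s 𝓑 n ≤ ENNReal.ofReal (K / n + δ) := by
  classical
  have : IsProbabilityMeasure (μ.restrict s) := ⟨by rw [Measure.restrict_apply_univ, hs]⟩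
  obtain ⟨x, hx⟩ := exists_hitting_of_card_le_exp (μ := μ.restrict s) (ε := K / n)
    (fun S hS => (hΓ S hS).1) hn (by rwa [div_mul_cancel₀ _ (Nat.cast_ne_zero.2 hn)])
  have hs_inf : s.Infinite := fun hfin => by simp [hfin.measure_zero μ] at hs
  set T := (Finset.univ.image x).filter (· ∈ s)
  obtain ⟨P, hTP, hPs, hPcard⟩ := hs_inf.exists_finset_superset_card_eq (T := T)
    (fun y hy => (Finset.mem_filter.1 hy).2)
    ((Finset.card_filter_le _ _).trans (Finset.card_image_le.trans_eq (Finset.card_fin n)))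
  refine iInf_le_of_le ⟨P, hPcard, hPs⟩ (iSup₂_le fun B hB => iSup_le fun hdisj => ?_)
  obtain ⟨L, hL, U, hU, hLB, hBU, hUL⟩ := hcov B hB
  have hL_small : μ L ≤ ENNReal.ofReal (K / n) := by
    by_contra! hL_large
    rw [← Measure.restrict_eq_self μ (hΓ L hL).2] at hL_large
    obtain ⟨i, hi⟩ := hx L hL hL_large
    have hxP : x i ∈ P :=
      hTP (Finset.mem_filter.2 ⟨Finset.mem_image_of_mem x (Finset.mem_univ i), (hΓ L hL).2 hi⟩)
    exact disjoint_left.1 hdisj (hLB hi) hxP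
  calc μ B ≤ μ U := measure_mono hBU
    _ ≤ μ (U ∩ L) + μ (U \ L) := measure_le_inter_add_sdiff μ U L
    _ ≤ ENNReal.ofReal (K / n) + ENNReal.ofReal δ :=
        add_le_add ((measure_mono inter_subset_right).trans hL_small) hUL
    _ = ENNReal.ofReal (K / n + δ) := (ENNReal.ofReal_add (by positivity) hδ).symm

theorem stmt10 (d : ℕ) (hd : 1 ≤ d) (𝓑 : Set (Set (Fin d → ℝ)))
    (h𝓑 : ∀ B ∈ 𝓑, MeasurableSet B ∧ B ⊆ Set.univ.pi fun _ => Set.Icc (0:ℝ) 1)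
    (c₁ c₂ c₃ : ℝ) (hc₁ : 1 ≤ c₁) (hc₂ : 0 ≤ c₂) (hc₃ : 0 ≤ c₃)
    (hcov : ∀ δ ∈ Set.Ioo (0:ℝ) 1, ∃ Γ : Finset (Set (Fin d → ℝ)),
      ↑Γ ⊆ 𝓑 ∧
      (∀ B ∈ 𝓑, ∃ L ∈ Γ, ∃ U ∈ Γ, L ⊆ B ∧ B ⊆ U ∧
        volume (U \ L) ≤ ENNReal.ofReal δ) ∧
      (Γ.card : ℝ) ≤ (c₁ * (d : ℝ) ^ c₂ * δ⁻¹) ^ (c₃ * d))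
    (n : ℕ) (hn : c₃ * d < n) :
    (⨅ P : {P : Finset (Fin d → ℝ) //
        P.card = n ∧ (↑P : Set (Fin d → ℝ)) ⊆ Set.univ.pi fun _ => Set.Icc (0:ℝ) 1},
      ⨆ B ∈ 𝓑, ⨆ _ : Disjoint B ((P : Finset (Fin d → ℝ)) : Set (Fin d → ℝ)), volume B) ≤
      ENNReal.ofReal (c₃ * d / n *
        (Real.log (c₁ * (d : ℝ) ^ (c₂ - 1) * n / c₃) + 1)) := by
  have : Nonempty (Fin d) := ⟨⟨0, hd⟩⟩
  have hd₁ : (1 : ℝ) ≤ d := by exact_mod_cast hd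
  have hn₀ : (0 : ℝ) < n := (by positivity : (0 : ℝ) ≤ c₃ * d).trans_lt hn
  have hcube : volume (Set.univ.pi fun _ : Fin d => Icc (0 : ℝ) 1) = 1 := by
    rw [volume_pi_pi]
    simp [Real.volume_Icc]
  have hdisp : ∀ δ ∈ Ioo (0 : ℝ) 1, dispersion volume (Set.univ.pi fun _ => Icc 0 1) 𝓑 n ≤
      ENNReal.ofReal (c₃ * d * log (c₁ * d ^ c₂ * δ⁻¹) / n + δ) := by
    intro δ hδ
    obtain ⟨Γ, hΓ𝓑, hΓcov, hΓcard⟩ := hcov δ hδ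
    have hA : 1 ≤ c₁ * d ^ c₂ * δ⁻¹ :=
      one_le_mul_of_one_le_of_one_le (one_le_mul_of_one_le_of_one_le hc₁ (one_le_rpow hd₁ hc₂))
        (one_le_inv₀ hδ.1 |>.2 hδ.2.le)
    refine dispersion_le_of_bracketing hcube (fun S hS => h𝓑 S (hΓ𝓑 hS)) hδ.1.le
      (mul_nonneg (by positivity) (log_nonneg hA)) hΓcov ?_ (Nat.cast_pos.1 hn₀).ne'
    rwa [mul_comm, ← rpow_def_of_pos (by linarith)]
  change dispersion volume _ 𝓑 n ≤ _
  rcases hc₃.eq_or_lt with rfl | hc₃pos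
  · simp only [zero_mul, zero_div, ENNReal.ofReal_zero]
    have hlim : Filter.Tendsto ENNReal.ofReal (𝓝[>] 0) (𝓝 0) :=
      (ENNReal.continuous_ofReal.tendsto' 0 0 ENNReal.ofReal_zero).mono_left nhdsWithin_le_nhds
    refine ge_of_tendsto hlim ?_
    filter_upwards [Ioo_mem_nhdsGT one_pos] with δ hδ
    simpa using hdisp δ hδ
  · have hδ : c₃ * d / n ∈ Ioo (0 : ℝ) 1 := ⟨by positivity, (div_lt_one hn₀).2 hn⟩
    convert hdisp _ hδ using 2
    have hlog_arg : c₁ * d ^ c₂ * (c₃ * d / n)⁻¹ = c₁ * d ^ (c₂ - 1) * n / c₃ := by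
      rw [rpow_sub_one (by positivity)]
      field_simp
    rw [hlog_arg]
    ring
end

section
/- For the family B_per of periodic axis-parallel boxes and every ε ∈ (0,1), the inverse minimal dispersion satisfies N_{B_per}(d, ε) ≤ 8 d ε^{-1} [ log(8d) + log ε^{-1} ]. -/
open MeasureTheory Set

/-- The periodic interval `I(x,y)`. -/
noncomputable def periodicInterval (x y : ℝ) : Set ℝ :=
  if x < y then Set.Ioo x y else Set.Icc 0 1 \ Set.Icc y x

/-- The periodic axis-parallel box `∏_k I_k(x,y)`. -/
noncomputable def periodicBox {d : ℕ} (x y : Fin d → ℝ) : Set (Fin d → ℝ) :=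
  Set.univ.pi fun k => periodicInterval (x k) (y k)

/-- The family of periodic axis-parallel boxes on `[0,1]^d`. -/
noncomputable def Bper (d : ℕ) : Set (Set (Fin d → ℝ)) :=
  {B | ∃ x y : Fin d → ℝ, (∀ k, x k ∈ Set.Icc (0:ℝ) 1) ∧
    (∀ k, y k ∈ Set.Icc (0:ℝ) 1) ∧ B = periodicBox x y}

/-- The minimal dispersion of `n`-point sets in `[0,1]^d` w.r.t. the test sets `𝓑`. -/
noncomputable def minDisp (d n : ℕ) (𝓑 : Set (Set (Fin d → ℝ))) : ENNReal :=
  ⨅ P : {P : Finset (Fin d → ℝ) //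
      P.card = n ∧ (↑P : Set (Fin d → ℝ)) ⊆ Set.univ.pi fun _ => Set.Icc (0:ℝ) 1},
    ⨆ B ∈ 𝓑, ⨆ _ : Disjoint B ((P : Finset (Fin d → ℝ)) : Set (Fin d → ℝ)), volume B

/-!
Round the corners of a periodic box of volume `> ε` inward to the grid `(1/M)ℤ` with
`M = ⌈4d/ε⌉`. Each side loses at most `2/M`, so by `∏ aₖ - ∑ (aₖ - bₖ) ≤ ∏ bₖ` the grid box
inside still has volume `≥ ε/2`. There are at most `(M+1)^{2d} ≤ (8d/ε)^{2d}` grid boxes, and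
`n` independent uniform points all miss a fixed one with probability `≤ (1-ε/2)^n ≤ e^{-nε/2}`.
By the union bound some `n` points hit every grid box of volume `≥ ε/2`, hence every periodic box
of volume `> ε`, as soon as `n > 4dε⁻¹ log(8d/ε)`.
-/

open scoped ENNReal

noncomputable def periodicLength (x y : ℝ) : ℝ :=
  if x < y then y - x else 1 - (x - y)

lemma periodicLength_nonneg {x y : ℝ} (hx : x ∈ Icc (0:ℝ) 1) (hy : y ∈ Icc (0:ℝ) 1) :
    0 ≤ periodicLength x y := by
  unfold periodicLength; split_ifs <;> linarith [hx.2, hy.1]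

lemma periodicLength_le_one {x y : ℝ} (hx : x ∈ Icc (0:ℝ) 1) (hy : y ∈ Icc (0:ℝ) 1) :
    periodicLength x y ≤ 1 := by
  unfold periodicLength; split_ifs <;> linarith [hx.1, hy.2]

lemma measurableSet_periodicInterval (x y : ℝ) : MeasurableSet (periodicInterval x y) := by
  unfold periodicInterval; split_ifs
  · exact measurableSet_Ioo
  · exact measurableSet_Icc.diff measurableSet_Icc

lemma periodicInterval_subset_Icc {x y : ℝ} (hx : x ∈ Icc (0:ℝ) 1) (hy : y ∈ Icc (0:ℝ) 1) :
    periodicInterval x y ⊆ Icc 0 1 := by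
  unfold periodicInterval; split_ifs
  · exact fun t ht => ⟨hx.1.trans ht.1.le, ht.2.le.trans hy.2⟩
  · exact sdiff_subset

lemma volume_periodicInterval {x y : ℝ} (hx : x ∈ Icc (0:ℝ) 1) (hy : y ∈ Icc (0:ℝ) 1) :
    volume (periodicInterval x y) = ENNReal.ofReal (periodicLength x y) := by
  unfold periodicInterval periodicLength; split_ifs with h
  · exact Real.volume_Ioo
  · rw [measure_sdiff (Icc_subset_Icc hy.1 hx.2) measurableSet_Icc.nullMeasurableSet
      (by simp [Real.volume_Icc]), Real.volume_Icc, Real.volume_Icc,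
      ← ENNReal.ofReal_sub _ (by linarith)]
    ring_nf

lemma periodicInterval_subset_of_shrink {x y x' y' t : ℝ} (hx : x ≤ x') (hx' : x' ≤ x + t)
    (hy : y' ≤ y) (hy' : y - t ≤ y') (ht : 2 * t < periodicLength x y) :
    periodicInterval x' y' ⊆ periodicInterval x y ∧
      periodicLength x y - 2 * t ≤ periodicLength x' y' ∧
      periodicLength x' y' ≤ periodicLength x y := by
  unfold periodicInterval periodicLength at *
  by_cases hxy : x < y
  · rw [if_pos hxy] at ht
    have hxy' : x' < y' := by linarith
    simp only [if_pos hxy, if_pos hxy']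
    exact ⟨Ioo_subset_Ioo hx hy, by linarith, by linarith⟩
  · have hxy' : ¬ x' < y' := by linarith
    simp only [if_neg hxy, if_neg hxy']
    exact ⟨sdiff_subset_sdiff_right (Icc_subset_Icc hy hx), by linarith, by linarith⟩

abbrev unitCube (d : ℕ) : Set (Fin d → ℝ) := univ.pi fun _ => Icc 0 1

lemma measurableSet_unitCube (d : ℕ) : MeasurableSet (unitCube d) :=
  MeasurableSet.univ_pi fun _ => measurableSet_Icc

lemma volume_unitCube (d : ℕ) : volume (unitCube d) = 1 := by
  rw [volume_pi_pi]; simp [Real.volume_Icc]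

instance isProbabilityMeasure_restrict_unitCube (d : ℕ) :
    IsProbabilityMeasure (volume.restrict (unitCube d)) :=
  ⟨by rw [Measure.restrict_apply_univ, volume_unitCube]⟩

lemma restrict_unitCube_compl_le {d : ℕ} {S : Set (Fin d → ℝ)} (hS : MeasurableSet S)
    (hSC : S ⊆ unitCube d) {δ : ℝ} (hδ : 0 ≤ δ) (hvol : ENNReal.ofReal δ ≤ volume S) :
    volume.restrict (unitCube d) Sᶜ ≤ ENNReal.ofReal (1 - δ) := by
  rw [prob_compl_eq_one_sub hS, Measure.restrict_apply hS, inter_eq_left.2 hSC,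
    ENNReal.ofReal_sub _ hδ, ENNReal.ofReal_one]
  exact tsub_le_tsub_left hvol 1

lemma unitCube_infinite {d : ℕ} (hd : d ≠ 0) : (unitCube d).Infinite := by
  have : Nonempty (Fin d) := Fin.pos_iff_nonempty.1 (Nat.pos_of_ne_zero hd)
  refine ((Icc_infinite zero_lt_one).image Function.const_injective.injOn).mono ?_
  rintro _ ⟨t, ht, rfl⟩ _ _
  exact ht

lemma measurableSet_periodicBox {d : ℕ} (x y : Fin d → ℝ) : MeasurableSet (periodicBox x y) :=
  MeasurableSet.univ_pi fun _ => measurableSet_periodicInterval _ _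

lemma periodicBox_subset_unitCube {d : ℕ} {x y : Fin d → ℝ} (hx : ∀ k, x k ∈ Icc (0:ℝ) 1)
    (hy : ∀ k, y k ∈ Icc (0:ℝ) 1) : periodicBox x y ⊆ unitCube d :=
  pi_mono fun k _ => periodicInterval_subset_Icc (hx k) (hy k)

lemma volume_periodicBox {d : ℕ} {x y : Fin d → ℝ} (hx : ∀ k, x k ∈ Icc (0:ℝ) 1)
    (hy : ∀ k, y k ∈ Icc (0:ℝ) 1) :
    volume (periodicBox x y) = ENNReal.ofReal (∏ k, periodicLength (x k) (y k)) := by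
  rw [periodicBox, volume_pi_pi,
    ENNReal.ofReal_prod_of_nonneg fun k _ => periodicLength_nonneg (hx k) (hy k)]
  exact Finset.prod_congr rfl fun k _ => volume_periodicInterval (hx k) (hy k)

lemma Finset.prod_sub_sum_sub_le_prod {ι : Type*} (s : Finset ι) {a b : ι → ℝ}
    (hb : ∀ i ∈ s, 0 ≤ b i) (hba : ∀ i ∈ s, b i ≤ a i) (ha : ∀ i ∈ s, a i ≤ 1) :
    ∏ i ∈ s, a i - ∑ i ∈ s, (a i - b i) ≤ ∏ i ∈ s, b i := by
  classical
  induction s using Finset.induction_on with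
  | empty => simp
  | insert j s hj ih =>
    simp only [Finset.mem_insert, forall_eq_or_imp] at hb hba ha
    rw [prod_insert hj, prod_insert hj, sum_insert hj]
    have hA1 : ∏ i ∈ s, a i ≤ 1 :=
      prod_le_one (fun i hi => (hb.2 i hi).trans (hba.2 i hi)) ha.2
    have hsum : 0 ≤ ∑ i ∈ s, (a i - b i) := sum_nonneg fun i hi => sub_nonneg.2 (hba.2 i hi)
    nlinarith [mul_le_mul_of_nonneg_left (ih hb.2 hba.2 ha.2) hb.1,
      mul_nonneg (sub_nonneg.2 hba.1) (sub_nonneg.2 hA1),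
      mul_nonneg hsum (sub_nonneg.2 (hba.1.trans ha.1))]

noncomputable def gridPoint (M : ℕ) (i : Fin (M + 1)) : ℝ := ((i : ℕ) : ℝ) / M

lemma gridPoint_mem_Icc (M : ℕ) (i : Fin (M + 1)) : gridPoint M i ∈ Icc (0:ℝ) 1 :=
  ⟨by unfold gridPoint; positivity,
    div_le_one_of_le₀ (by exact_mod_cast Nat.lt_succ_iff.1 i.isLt) (Nat.cast_nonneg _)⟩

lemma exists_gridPoint_near {M : ℕ} (hM : 0 < M) {x : ℝ} (hx : x ∈ Icc (0:ℝ) 1) :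
    ∃ i j : Fin (M + 1), x ≤ gridPoint M i ∧ gridPoint M i ≤ x + (M:ℝ)⁻¹ ∧
      x - (M:ℝ)⁻¹ ≤ gridPoint M j ∧ gridPoint M j ≤ x := by
  have hMR : (0:ℝ) < M := Nat.cast_pos.2 hM
  have hxM : 0 ≤ x * M := mul_nonneg hx.1 hMR.le
  have hxM' : x * M ≤ M := by nlinarith [hx.2]
  have hceil : ⌈x * M⌉₊ ≤ M := Nat.ceil_le.2 hxM'
  have hfloor : ⌊x * M⌋₊ ≤ M := (Nat.floor_le_floor hxM').trans (Nat.floor_natCast M).le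
  refine ⟨⟨_, Nat.lt_succ_of_le hceil⟩, ⟨_, Nat.lt_succ_of_le hfloor⟩, ?_, ?_, ?_, ?_⟩ <;>
    simp only [gridPoint]
  · exact (le_div_iff₀ hMR).2 (Nat.le_ceil _)
  · rw [div_le_iff₀ hMR, add_mul, inv_mul_cancel₀ hMR.ne']
    exact (Nat.ceil_lt_add_one hxM).le
  · rw [le_div_iff₀ hMR, sub_mul, inv_mul_cancel₀ hMR.ne']
    linarith [Nat.lt_floor_add_one (x * M)]
  · exact (div_le_iff₀ hMR).2 (Nat.floor_le hxM)

noncomputable def gridBox {d : ℕ} (M : ℕ) (i j : Fin d → Fin (M + 1)) : Set (Fin d → ℝ) :=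
  periodicBox (fun k => gridPoint M (i k)) (fun k => gridPoint M (j k))

lemma exists_gridBox_subset {d M : ℕ} {ε : ℝ} (hε : 0 < ε) (hM : 4 * d / ε ≤ M)
    {x y : Fin d → ℝ} (hx : ∀ k, x k ∈ Icc (0:ℝ) 1) (hy : ∀ k, y k ∈ Icc (0:ℝ) 1)
    (hvol : ENNReal.ofReal ε < volume (periodicBox x y)) :
    ∃ i j : Fin d → Fin (M + 1), gridBox M i j ⊆ periodicBox x y ∧
      ENNReal.ofReal (ε / 2) ≤ volume (gridBox M i j) := by
  set L : Fin d → ℝ := fun k => periodicLength (x k) (y k)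
  have hL0 : ∀ k, 0 ≤ L k := fun k => periodicLength_nonneg (hx k) (hy k)
  have hprod : ε < ∏ k, L k := by
    rwa [volume_periodicBox hx hy, ENNReal.ofReal_lt_ofReal_iff_of_nonneg hε.le] at hvol
  have hloss : (d : ℝ) * (2 * (M:ℝ)⁻¹) ≤ ε / 2 := by
    rcases Nat.eq_zero_or_pos M with rfl | hM0
    · simp only [Nat.cast_zero, inv_zero, mul_zero]; positivity
    rw [div_le_iff₀ hε] at hM
    have hMR : (0:ℝ) < M := Nat.cast_pos.2 hM0
    rw [← div_eq_mul_inv, mul_div, div_le_div_iff₀ hMR two_pos]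
    linarith
  have hshrink : ∀ k, ∃ i j : Fin (M + 1),
      periodicInterval (gridPoint M i) (gridPoint M j) ⊆ periodicInterval (x k) (y k) ∧
      L k - 2 * (M:ℝ)⁻¹ ≤ periodicLength (gridPoint M i) (gridPoint M j) ∧
      periodicLength (gridPoint M i) (gridPoint M j) ≤ L k := by
    intro k
    have hd : (1:ℝ) ≤ d := by exact_mod_cast k.pos
    have hM0 : 0 < M := Nat.cast_pos.1 ((by positivity : (0:ℝ) < 4 * d / ε).trans_le hM)
    have hLk : ε < L k := hprod.trans_le <| by
      simpa using Finset.prod_le_prod_of_subset_of_le_one (Finset.subset_univ {k})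
        (fun j _ => hL0 j) (fun j _ _ => periodicLength_le_one (hx j) (hy j))
    obtain ⟨i, -, hi, hi', -, -⟩ := exists_gridPoint_near hM0 (hx k)
    obtain ⟨-, j, -, -, hj', hj⟩ := exists_gridPoint_near hM0 (hy k)
    have hM2 : 0 ≤ 2 * (M:ℝ)⁻¹ := by positivity
    exact ⟨i, j, periodicInterval_subset_of_shrink hi hi' hj hj' (by nlinarith)⟩
  choose i j hsub hlow hup using hshrink
  refine ⟨i, j, pi_mono fun k _ => hsub k, ?_⟩
  rw [gridBox, volume_periodicBox (fun k => gridPoint_mem_Icc _ _) fun k => gridPoint_mem_Icc _ _]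
  refine ENNReal.ofReal_le_ofReal ?_
  calc ε / 2 ≤ ∏ k, L k - ∑ _k : Fin d, 2 * (M:ℝ)⁻¹ := by
        rw [Finset.sum_const, Finset.card_univ, Fintype.card_fin, nsmul_eq_mul]; linarith
    _ ≤ ∏ k, L k - ∑ k, (L k - periodicLength (gridPoint M (i k)) (gridPoint M (j k))) := by
      gcongr with k; linarith [hlow k]
    _ ≤ _ := Finset.prod_sub_sum_sub_le_prod _ (fun k _ => periodicLength_nonneg
      (gridPoint_mem_Icc _ _) (gridPoint_mem_Icc _ _)) (fun k _ => hup k)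
      (fun k _ => periodicLength_le_one (hx k) (hy k))

theorem exists_forall_exists_mem_of_card_mul_pow_lt_one {α ι : Type*} [MeasurableSpace α]
    [Fintype ι] (μ : Measure α) [IsProbabilityMeasure μ] {C : Set α} (hC : ∀ᵐ x ∂μ, x ∈ C)
    (S : ι → Set α) {q : ℝ≥0∞} (hq : ∀ p, μ (S p)ᶜ ≤ q) {n : ℕ}
    (hn : Fintype.card ι * q ^ n < 1) :
    ∃ ω : Fin n → α, (∀ i, ω i ∈ C) ∧ ∀ p, ∃ i, ω i ∈ S p := by
  set ν := Measure.pi fun _ : Fin n => μ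
  set Miss := ⋃ p, univ.pi fun _ : Fin n => (S p)ᶜ
  have hMiss : ν Miss < 1 :=
    calc ν Miss ≤ ∑ p, ν (univ.pi fun _ : Fin n => (S p)ᶜ) := measure_iUnion_fintype_le _ _
      _ ≤ ∑ _p : ι, q ^ n := by
        gcongr with p
        rw [Measure.pi_pi, Finset.prod_const, Finset.card_univ, Fintype.card_fin]
        exact pow_le_pow_left' (hq p) n
      _ = Fintype.card ι * q ^ n := by simp
      _ < 1 := hn
  have hHit : ν Missᶜ ≠ 0 := by
    intro h
    have := measure_union_le (μ := ν) Miss Missᶜ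
    rw [union_compl_self, measure_univ, h, add_zero] at this
    exact this.not_gt hMiss
  have hωC : ∀ᵐ ω ∂ν, ∀ i, ω i ∈ C :=
    Filter.eventually_all.2 fun _ => Measure.tendsto_eval_ae_ae.eventually hC
  obtain ⟨ω, hωMiss, hω⟩ :=
    Measure.exists_mem_of_measure_ne_zero_of_ae hHit (ae_restrict_of_ae hωC)
  exact ⟨ω, hω, by simpa [Miss] using hωMiss⟩

theorem Set.Infinite.exists_finset_superset_card_eq_s17 {α : Type*} {S : Set α} (hS : S.Infinite)
    {s : Finset α} (hs : ↑s ⊆ S) {n : ℕ} (hn : s.card ≤ n) :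
    ∃ t : Finset α, s ⊆ t ∧ ↑t ⊆ S ∧ t.card = n := by
  classical
  have := hS.to_subtype
  obtain ⟨t, hst, rfl⟩ := Infinite.exists_superset_card_eq (s.subtype (· ∈ S)) n
    ((Finset.card_subtype _ _).trans_le ((Finset.card_filter_le _ _).trans hn))
  refine ⟨t.map (Function.Embedding.subtype _), fun x hx => ?_, ?_, Finset.card_map _⟩
  · exact Finset.mem_map.2 ⟨⟨x, hs hx⟩, hst (Finset.mem_subtype.2 hx), rfl⟩
  · intro x hx
    obtain ⟨y, -, rfl⟩ := Finset.mem_map.1 hx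
    exact y.2

lemma minDisp_le {d n : ℕ} {𝓑 : Set (Set (Fin d → ℝ))} {r : ℝ≥0∞} (P : Finset (Fin d → ℝ))
    (hPn : P.card = n) (hP : ↑P ⊆ unitCube d) (h : ∀ B ∈ 𝓑, Disjoint B ↑P → volume B ≤ r) :
    minDisp d n 𝓑 ≤ r :=
  (iInf_le _ ⟨P, hPn, hP⟩).trans (iSup₂_le fun B hB => iSup_le (h B hB))

lemma pow_mul_one_sub_pow_lt_one {c δ : ℝ} (hc : 0 < c) (hδ : δ ≤ 1) {m n : ℕ}
    (h : m * Real.log c < n * δ) : c ^ m * (1 - δ) ^ n < 1 := by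
  have hexp : (1 - δ) ^ n ≤ Real.exp (n * -δ) := by
    rw [Real.exp_nat_mul]
    exact pow_le_pow_left₀ (sub_nonneg.2 hδ) (by linarith [Real.add_one_le_exp (-δ)]) n
  calc c ^ m * (1 - δ) ^ n ≤ Real.exp (m * Real.log c) * Real.exp (n * -δ) := by
        rw [Real.exp_nat_mul, Real.exp_log hc]
        gcongr
    _ < 1 := by rw [← Real.exp_add, Real.exp_lt_one_iff]; linarith

theorem minDisp_Bper_le {d M n : ℕ} (hd : d ≠ 0) {ε : ℝ} (hε : 0 < ε) (hε1 : ε ≤ 1)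
    (hM : 4 * d / ε ≤ M) (hn : ((M : ℝ) + 1) ^ (2 * d) * (1 - ε / 2) ^ n < 1) :
    minDisp d n (Bper d) ≤ ENNReal.ofReal ε := by
  classical
  let ι := {p : (Fin d → Fin (M + 1)) × (Fin d → Fin (M + 1)) //
    ENNReal.ofReal (ε / 2) ≤ volume (gridBox M p.1 p.2)}
  have hmiss : ∀ p : ι, volume.restrict (unitCube d) (gridBox M p.1.1 p.1.2)ᶜ ≤
      ENNReal.ofReal (1 - ε / 2) := fun p =>
    restrict_unitCube_compl_le (measurableSet_periodicBox _ _)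
      (periodicBox_subset_unitCube (fun k => gridPoint_mem_Icc M (p.1.1 k))
        (fun k => gridPoint_mem_Icc M (p.1.2 k))) (by positivity) p.2
  have hpow : 0 ≤ (1 - ε / 2) ^ n := pow_nonneg (by linarith) n
  have hcard : (Fintype.card ι : ℝ) ≤ ((M : ℝ) + 1) ^ (2 * d) := by
    have := Fintype.card_subtype_le
      (fun p : (Fin d → Fin (M + 1)) × (Fin d → Fin (M + 1)) =>
        ENNReal.ofReal (ε / 2) ≤ volume (gridBox M p.1 p.2))
    simp only [Fintype.card_prod, Fintype.card_fun, Fintype.card_fin, ← pow_add, ← two_mul] at this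
    exact_mod_cast this
  obtain ⟨ω, hωC, hω⟩ := exists_forall_exists_mem_of_card_mul_pow_lt_one _
    (ae_restrict_mem (measurableSet_unitCube d)) (fun p : ι => gridBox M p.1.1 p.1.2) hmiss
    (n := n) <| by
      rw [← ENNReal.ofReal_pow (by linarith), ← ENNReal.ofReal_natCast,
        ← ENNReal.ofReal_mul (Nat.cast_nonneg _), ENNReal.ofReal_lt_one]
      exact (mul_le_mul_of_nonneg_right hcard hpow).trans_lt hn
  obtain ⟨P, hωP, hPC, hPn⟩ := (unitCube_infinite hd).exists_finset_superset_card_eq_s17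
    (s := Finset.univ.image ω) (by simpa [Set.range_subset_iff] using hωC)
    (Finset.card_image_le.trans_eq (Finset.card_fin n))
  refine minDisp_le P hPn hPC ?_
  rintro _ ⟨x, y, hx, hy, rfl⟩ hdisj
  by_contra! hvol
  obtain ⟨i, j, hsub, hvolij⟩ := exists_gridBox_subset hε hM hx hy hvol
  obtain ⟨k, hk⟩ := hω ⟨(i, j), hvolij⟩
  exact disjoint_left.1 hdisj (hsub hk) (hωP (Finset.mem_image_of_mem ω (Finset.mem_univ k)))

lemma ceil_add_one_pow_mul_one_sub_pow_lt_one {d : ℕ} (hd : 1 ≤ d) {ε : ℝ} (hε0 : 0 < ε)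
    (hε1 : ε < 1) {n : ℕ} (hn : 4 * d * ε⁻¹ * Real.log (8 * d / ε) < n) :
    ((⌈4 * d / ε⌉₊ : ℝ) + 1) ^ (2 * d) * (1 - ε / 2) ^ n < 1 := by
  have hd' : (1:ℝ) ≤ d := by exact_mod_cast hd
  have h4 : 4 ≤ 4 * d / ε := by rw [le_div_iff₀ hε0]; linarith
  have hM : (⌈4 * d / ε⌉₊ : ℝ) + 1 ≤ 8 * d / ε := by
    have h8 : 8 * d / ε = 2 * (4 * d / ε) := by ring
    linarith [Nat.ceil_lt_add_one (by positivity : 0 ≤ 4 * d / ε)]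
  refine (mul_le_mul_of_nonneg_right (pow_le_pow_left₀ (by positivity) hM _)
    (pow_nonneg (by linarith) _)).trans_lt (pow_mul_one_sub_pow_lt_one (by positivity)
      (by linarith) ?_)
  calc ((2 * d : ℕ) : ℝ) * Real.log (8 * d / ε)
      = 4 * d * ε⁻¹ * Real.log (8 * d / ε) * (ε / 2) := by push_cast; field_simp; ring
    _ < n * (ε / 2) := by gcongr

theorem stmt17 (d : ℕ) (hd : 1 ≤ d) (ε : ℝ) (hε : ε ∈ Set.Ioo (0:ℝ) 1) :
    ((sInf {n : ℕ | minDisp d n (Bper d) ≤ ENNReal.ofReal ε} : ℕ) : ℝ) ≤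
      8 * d * ε⁻¹ * (Real.log (8 * d) + Real.log ε⁻¹) := by
  obtain ⟨hε0, hε1⟩ := hε
  set a : ℝ := 4 * d * ε⁻¹ * Real.log (8 * d / ε)
  have ha : 1 ≤ a := by
    have hdε : 1 ≤ d * ε⁻¹ := by
      rw [← div_eq_mul_inv, one_le_div hε0]; linarith [(Nat.one_le_cast (α := ℝ)).2 hd]
    have hc : 8 ≤ 8 * d / ε := by rw [mul_div_assoc, div_eq_mul_inv]; linarith
    have : 7 / 8 ≤ Real.log (8 * d / ε) := by
      linarith [Real.one_sub_inv_le_log_of_pos (by linarith : (0:ℝ) < 8 * d / ε),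
        inv_anti₀ (by norm_num) hc]
    nlinarith
  have hmem := minDisp_Bper_le (by omega) hε0 hε1.le (Nat.le_ceil _)
    (ceil_add_one_pow_mul_one_sub_pow_lt_one hd hε0 hε1 (n := ⌊a⌋₊ + 1)
      (by push_cast; exact Nat.lt_floor_add_one a))
  calc ((sInf {n : ℕ | minDisp d n (Bper d) ≤ ENNReal.ofReal ε} : ℕ) : ℝ)
      ≤ (⌊a⌋₊ + 1 : ℕ) := by exact_mod_cast Nat.sInf_le hmem
    _ ≤ 2 * a := by push_cast; linarith [Nat.floor_le (by linarith : 0 ≤ a)]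
    _ = 8 * d * ε⁻¹ * (Real.log (8 * d) + Real.log ε⁻¹) := by
      rw [← Real.log_mul (by positivity) (by positivity), ← div_eq_mul_inv]; ring
end
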